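/- arXiv:1411.2991 — 3 statements merged into one kernel-verified Lean document; each statement's English description precedes it below -/
import Mathlib

section
/- For any α, t > 0, any nonnegative measurable kernel p(s,x,y), and any measurable f : M → ℝ, one has (1 - e^{-αt}) · sup_{x∈M} ∫_M (∫_0^∞ e^{-αs} p(s,x,y) ds) |f(y)| dμ(y) ≤ sup_{x∈M} ∫_0^t ∫_M p(s,x,y) |f(y)| dμ(y) ds, provided the kernel satisfies the semigroup (Chapman–Kolmogorov) property ∫_M p(s,x,z) p(u,z,y) dμ(z) = p(s+u,x,y) and sub-Markov property ∫_M p(s,x,y) dμ(y) ≤ 1. -/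
open MeasureTheory Set ENNReal

/-!
Write `P_s g(x) = ∫ p(s,x,y) g(y) dμ(y)` with `g = |f|` and `S = sup_x ∫_0^t P_s g(x) ds`.
By Fubini the resolvent integral at `x` is `∫_0^∞ e^{-αs} P_s g(x) ds`. Cut `(0,∞)` into the
blocks `(nt, (n+1)t]`. On the `n`-th block `e^{-αs} ≤ e^{-αnt}`, and by Chapman–Kolmogorov
`P_{nt+u} = P_{nt} P_u`, so the sub-Markov property bounds the block integral of `P_s g(x)` by `S`.
Summing the geometric series gives `∫_0^∞ e^{-αs} P_s g(x) ds ≤ S / (1 - e^{-αt})`.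
-/

theorem setLIntegral_Ioc_eq_comp_const_add (F : ℝ → ℝ≥0∞) (a b c : ℝ) :
    ∫⁻ s in Ioc b c, F s = ∫⁻ u in Ioc (b - a) (c - a), F (a + u) := by
  rw [← preimage_const_add_Ioc]
  exact ((measurePreserving_add_left volume a).setLIntegral_comp_preimage_emb
    (MeasurableEquiv.addLeft a).measurableEmbedding F _).symm

section NatMulBlocks

variable {t : ℝ}

theorem monotone_natCast_mul (ht : 0 ≤ t) : Monotone fun n : ℕ => n * t :=
  Nat.mono_cast.mul_const ht

theorem iUnion_Ioc_nat_mul_eq_Ioi (ht : 0 < t) :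
    ⋃ n : ℕ, Ioc (n * t) ((n + 1) * t) = Ioi 0 := by
  have hunbdd : ¬BddAbove (range fun n : ℕ => n * t) := by
    rintro ⟨b, hb⟩
    obtain ⟨n, hn⟩ := exists_nat_gt (b / t)
    have := hb ⟨n, rfl⟩
    rw [div_lt_iff₀ ht] at hn
    linarith
  simpa [Order.succ_eq_add_one] using
    iUnion_Ioc_map_succ_eq_Ioi (f := fun n : ℕ => n * t)
      (fun _ => monotone_natCast_mul ht.le bot_le) hunbdd

theorem pairwise_disjoint_Ioc_nat_mul (ht : 0 < t) :
    Pairwise (Function.onFun Disjoint fun n : ℕ => Ioc (n * t) ((n + 1) * t)) := by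
  simpa [Order.succ_eq_add_one] using
    (monotone_natCast_mul ht.le).pairwise_disjoint_on_Ioc_succ

theorem ofReal_one_sub_exp_mul_setLIntegral_Ioi_le {F : ℝ → ℝ≥0∞} {α : ℝ} {B : ℝ≥0∞}
    (hα : 0 ≤ α) (ht : 0 < t) (hF : ∀ n : ℕ, ∫⁻ s in Ioc (n * t) ((n + 1) * t), F s ≤ B) :
    ENNReal.ofReal (1 - Real.exp (-α * t)) *
        ∫⁻ s in Ioi 0, ENNReal.ofReal (Real.exp (-α * s)) * F s ≤ B := by
  set r := ENNReal.ofReal (Real.exp (-α * t))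
  have hblock (n : ℕ) :
      ∫⁻ s in Ioc (n * t) ((n + 1) * t), ENNReal.ofReal (Real.exp (-α * s)) * F s ≤
        r ^ n * B := by
    have hrn : r ^ n = ENNReal.ofReal (Real.exp (-α * (n * t))) := by
      rw [← ENNReal.ofReal_pow (Real.exp_nonneg _), ← Real.exp_nat_mul]
      ring_nf
    calc ∫⁻ s in Ioc (n * t) ((n + 1) * t), ENNReal.ofReal (Real.exp (-α * s)) * F s
        ≤ ∫⁻ s in Ioc (n * t) ((n + 1) * t), r ^ n * F s :=
          setLIntegral_mono' measurableSet_Ioc fun s hs => by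
            rw [hrn]
            gcongr ?_ * _
            exact ENNReal.ofReal_le_ofReal <| Real.exp_le_exp.2 <|
              mul_le_mul_of_nonpos_left hs.1.le (neg_nonpos.2 hα)
      _ = r ^ n * ∫⁻ s in Ioc (n * t) ((n + 1) * t), F s :=
          lintegral_const_mul' _ _ (pow_ne_top ofReal_ne_top)
      _ ≤ r ^ n * B := by gcongr; exact hF n
  have hsum : ∫⁻ s in Ioi 0, ENNReal.ofReal (Real.exp (-α * s)) * F s ≤ (1 - r)⁻¹ * B :=
    calc ∫⁻ s in Ioi 0, ENNReal.ofReal (Real.exp (-α * s)) * F s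
        = ∑' n : ℕ,
            ∫⁻ s in Ioc (n * t) ((n + 1) * t), ENNReal.ofReal (Real.exp (-α * s)) * F s := by
          rw [← iUnion_Ioc_nat_mul_eq_Ioi ht,
            lintegral_iUnion (fun _ => measurableSet_Ioc) (pairwise_disjoint_Ioc_nat_mul ht)]
      _ ≤ ∑' n : ℕ, r ^ n * B := ENNReal.tsum_le_tsum hblock
      _ = (1 - r)⁻¹ * B := by rw [ENNReal.tsum_mul_right, ENNReal.tsum_geometric]
  have hcoeff : ENNReal.ofReal (1 - Real.exp (-α * t)) = 1 - r := by
    rw [ENNReal.ofReal_sub _ (Real.exp_nonneg _), ENNReal.ofReal_one]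
  calc ENNReal.ofReal (1 - Real.exp (-α * t)) *
        ∫⁻ s in Ioi 0, ENNReal.ofReal (Real.exp (-α * s)) * F s
      ≤ (1 - r) * ((1 - r)⁻¹ * B) := by rw [hcoeff]; gcongr
    _ ≤ B := by
      rw [← mul_assoc]
      exact mul_le_of_le_one_left' (ENNReal.mul_inv_le_one _)

end NatMulBlocks

section KernelOp

variable {M : Type*} [MeasurableSpace M]

noncomputable def kernelOp (μ : Measure M) (p : ℝ → M → M → ℝ≥0∞) (s : ℝ) (g : M → ℝ≥0∞)
    (x : M) : ℝ≥0∞ :=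
  ∫⁻ y, p s x y * g y ∂μ

variable {μ : Measure M} [SFinite μ] {p : ℝ → M → M → ℝ≥0∞} {g : M → ℝ≥0∞}

theorem measurable_kernelOp_uncurry (hp : Measurable fun q : ℝ × M × M => p q.1 q.2.1 q.2.2)
    (hg : Measurable g) : Measurable fun q : ℝ × M => kernelOp μ p q.1 g q.2 :=
  Measurable.lintegral_prod_right'
    (f := fun q : (ℝ × M) × M => p q.1.1 q.1.2 q.2 * g q.2) (by fun_prop)

theorem kernelOp_add (hp : Measurable fun q : ℝ × M × M => p q.1 q.2.1 q.2.2)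
    (hg : Measurable g) {s u : ℝ}
    (hCK : ∀ x y, ∫⁻ z, p s x z * p u z y ∂μ = p (s + u) x y) :
    kernelOp μ p (s + u) g = kernelOp μ p s (kernelOp μ p u g) := by
  funext x
  calc kernelOp μ p (s + u) g x = ∫⁻ y, ∫⁻ z, p s x z * (p u z y * g y) ∂μ ∂μ := by
        refine lintegral_congr fun y => ?_
        simp only [← hCK x y, ← mul_assoc]
        exact (lintegral_mul_const _ (by fun_prop)).symm
    _ = ∫⁻ z, ∫⁻ y, p s x z * (p u z y * g y) ∂μ ∂μ :=
        lintegral_lintegral_swap (by unfold Function.uncurry; fun_prop)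
    _ = kernelOp μ p s (kernelOp μ p u g) x :=
        lintegral_congr fun z => lintegral_const_mul _ (by fun_prop)

theorem setLIntegral_kernelOp_add_le
    (hp : Measurable fun q : ℝ × M × M => p q.1 q.2.1 q.2.2) (hg : Measurable g) {s t : ℝ}
    (hCK : ∀ u, 0 < u → ∀ x y, ∫⁻ z, p s x z * p u z y ∂μ = p (s + u) x y)
    (hsub : ∀ x, ∫⁻ y, p s x y ∂μ ≤ 1) (x : M) :
    ∫⁻ u in Ioc 0 t, kernelOp μ p (s + u) g x ≤
      ⨆ z, ∫⁻ u in Ioc 0 t, kernelOp μ p u g z := by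
  set S := ⨆ z, ∫⁻ u in Ioc 0 t, kernelOp μ p u g z
  have hP := measurable_kernelOp_uncurry (μ := μ) hp hg
  calc ∫⁻ u in Ioc 0 t, kernelOp μ p (s + u) g x
      = ∫⁻ u in Ioc 0 t, ∫⁻ z, p s x z * kernelOp μ p u g z ∂μ :=
        setLIntegral_congr_fun measurableSet_Ioc fun u hu => by
          rw [kernelOp_add hp hg (hCK u hu.1)]; rfl
    _ = ∫⁻ z, (∫⁻ u in Ioc 0 t, p s x z * kernelOp μ p u g z) ∂μ :=
        lintegral_lintegral_swap
          ((by fun_prop : Measurable fun q : ℝ × M => p s x q.2).mul hP).aemeasurable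
    _ = ∫⁻ z, p s x z * (∫⁻ u in Ioc 0 t, kernelOp μ p u g z) ∂μ :=
        lintegral_congr fun z => lintegral_const_mul _ (hP.comp measurable_prodMk_right)
    _ ≤ ∫⁻ z, p s x z * S ∂μ := by
        gcongr with z
        exact le_iSup (fun z => ∫⁻ u in Ioc 0 t, kernelOp μ p u g z) z
    _ = (∫⁻ z, p s x z ∂μ) * S := lintegral_mul_const _ (by fun_prop)
    _ ≤ S := mul_le_of_le_one_left' (hsub x)

theorem setLIntegral_Ioc_nat_mul_kernelOp_le
    (hp : Measurable fun q : ℝ × M × M => p q.1 q.2.1 q.2.2) (hg : Measurable g)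
    (hCK : ∀ s u : ℝ, 0 < s → 0 < u → ∀ x y : M,
      ∫⁻ z, p s x z * p u z y ∂μ = p (s + u) x y)
    (hsub : ∀ s : ℝ, 0 < s → ∀ x : M, ∫⁻ y, p s x y ∂μ ≤ 1) {t : ℝ} (ht : 0 < t)
    (n : ℕ) (x : M) :
    ∫⁻ s in Ioc (n * t) ((n + 1) * t), kernelOp μ p s g x ≤
      ⨆ z, ∫⁻ u in Ioc 0 t, kernelOp μ p u g z := by
  rcases n.eq_zero_or_pos with rfl | hn
  · simpa using le_iSup (fun z => ∫⁻ u in Ioc 0 t, kernelOp μ p u g z) x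
  have hnt : 0 < (n : ℝ) * t := by positivity
  rw [setLIntegral_Ioc_eq_comp_const_add _ (n * t), sub_self,
    show ((n : ℝ) + 1) * t - n * t = t by ring]
  exact setLIntegral_kernelOp_add_le hp hg (fun u hu => hCK _ u hnt hu) (hsub _ hnt) x

theorem lintegral_setLIntegral_mul_kernel_mul_eq
    (hp : Measurable fun q : ℝ × M × M => p q.1 q.2.1 q.2.2) (hg : Measurable g)
    {w : ℝ → ℝ≥0∞} (hw : Measurable w) (I : Set ℝ) (x : M) :
    ∫⁻ y, (∫⁻ s in I, w s * p s x y) * g y ∂μ = ∫⁻ s in I, w s * kernelOp μ p s g x :=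
  calc ∫⁻ y, (∫⁻ s in I, w s * p s x y) * g y ∂μ
      = ∫⁻ y, (∫⁻ s in I, w s * (p s x y * g y)) ∂μ := by
        refine lintegral_congr fun y => ?_
        simp only [← mul_assoc]
        exact (lintegral_mul_const _ (by fun_prop)).symm
    _ = ∫⁻ s in I, ∫⁻ y, w s * (p s x y * g y) ∂μ :=
        lintegral_lintegral_swap (f := fun y s => w s * (p s x y * g y))
          (by unfold Function.uncurry; fun_prop)
    _ = ∫⁻ s in I, w s * kernelOp μ p s g x :=
        lintegral_congr fun s => lintegral_const_mul _ (by fun_prop)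

end KernelOp

/-- For a nonnegative measurable kernel `p` satisfying the Chapman–Kolmogorov
identity and the sub-Markov property, for all `α, t > 0` and measurable `f`,
`(1 - e^{-αt}) · sup_x ∫_M (∫_0^∞ e^{-αs} p(s,x,y) ds)|f(y)| dμ(y)
   ≤ sup_x ∫_0^t ∫_M p(s,x,y)|f(y)| dμ(y) ds`. -/
theorem resolvent_le_time_integral
    {M : Type*} [MeasurableSpace M] (μ : Measure M) [SigmaFinite μ]
    (p : ℝ → M → M → ℝ≥0∞) (f : M → ℝ)
    (hp : Measurable fun q : ℝ × M × M => p q.1 q.2.1 q.2.2)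
    (hf : Measurable f)
    (hCK : ∀ s u : ℝ, 0 < s → 0 < u → ∀ x y : M,
      ∫⁻ z, p s x z * p u z y ∂μ = p (s + u) x y)
    (hsub : ∀ s : ℝ, 0 < s → ∀ x : M, ∫⁻ y, p s x y ∂μ ≤ 1)
    (α t : ℝ) (hα : 0 < α) (ht : 0 < t) :
    ENNReal.ofReal (1 - Real.exp (-α * t)) *
        (⨆ x : M, ∫⁻ y,
          (∫⁻ s in Ioi (0:ℝ), ENNReal.ofReal (Real.exp (-α * s)) * p s x y) *
            ENNReal.ofReal |f y| ∂μ)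
      ≤ ⨆ x : M, ∫⁻ s in Ioc (0:ℝ) t, ∫⁻ y, p s x y * ENNReal.ofReal |f y| ∂μ := by
  have hg : Measurable fun y => ENNReal.ofReal |f y| := hf.abs.ennreal_ofReal
  rw [ENNReal.mul_iSup]
  refine iSup_le fun x => ?_
  rw [lintegral_setLIntegral_mul_kernel_mul_eq hp hg (by fun_prop)]
  exact ofReal_one_sub_exp_mul_setLIntegral_Ioi_le hα.le ht
    (setLIntegral_Ioc_nat_mul_kernelOp_le hp hg hCK hsub ht · x)
end

section
/- If a quadratic form q on a Hilbert space satisfies |q(u)| ≤ a·Q₀(u) + b·‖u‖² for all u in the form domain of a closed nonnegative densely defined form Q₀, with a ∈ [0,1) and b ≥ 0, then the form sum Q₀ + q with domain D(Q₀) is closed, densely defined, and semibounded from below (by -b). -/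
/-!
Write `T = Q₀ + q + b‖·‖²` and `W = 2 (Q₀ + b‖·‖²)`; the bound on `q` gives
`(1 - a) Q₀ ≤ T ≤ W` on the form domain. Closedness of `T` amounts to: if `vₙ → u` with
`T vₙ ≤ c`, then `T u ≤ c`. With `vₙ = u + wₙ` and `T ≥ 0` one has `T vₙ ≥ T u + 2 T(u, wₙ)`,
so it suffices that the polarization `T(u, wₙ)` tends to `0`. Lower semicontinuity of `W`,
applied at the points `m d - wₙ`, shows that `wₙ` is weakly null for `W`, and a gliding-hump
argument transfers weak nullity from `W` to every form dominated by `W`, in particular to `T`.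
Since only the parallelogram law is available, the argument runs on the additive subgroup
`D(Q₀)` and never needs completeness of the form domain (no Riesz representation).
-/

open Filter Topology ENNReal

section Parallelogram

variable {G : Type*} [AddCommGroup G]

def ParallelogramOn (S : AddSubgroup G) (g : G → ℝ) : Prop :=
  ∀ x ∈ S, ∀ y ∈ S, g (x + y) + g (x - y) = 2 * g x + 2 * g y

noncomputable def polarization (g : G → ℝ) (x y : G) : ℝ := (g (x + y) - g x - g y) / 2

theorem polarization_comm (g : G → ℝ) (x y : G) : polarization g x y = polarization g y x := by
  rw [polarization, polarization, add_comm x y]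
  ring

theorem map_add_eq_polarization (g : G → ℝ) (x y : G) :
    g (x + y) = g x + 2 * polarization g x y + g y := by
  rw [polarization]
  ring

namespace ParallelogramOn

variable {S : AddSubgroup G} {g : G → ℝ} {x y z : G}

theorem add {g' : G → ℝ} (hg : ParallelogramOn S g) (hg' : ParallelogramOn S g') :
    ParallelogramOn S (fun x => g x + g' x) := fun x hx y hy => by
  linarith [hg x hx y hy, hg' x hx y hy]

theorem const_mul (hg : ParallelogramOn S g) (c : ℝ) : ParallelogramOn S (fun x => c * g x) :=
  fun x hx y hy => by linear_combination c * hg x hx y hy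

theorem map_zero (hg : ParallelogramOn S g) : g 0 = 0 := by
  have h := hg 0 S.zero_mem 0 S.zero_mem
  rw [add_zero, sub_zero] at h
  linarith

theorem map_neg (hg : ParallelogramOn S g) (hx : x ∈ S) : g (-x) = g x := by
  have h := hg 0 S.zero_mem x hx
  rw [zero_add, zero_sub, hg.map_zero] at h
  linarith

theorem map_sub (hg : ParallelogramOn S g) (hx : x ∈ S) (hy : y ∈ S) :
    g (x - y) = g x - 2 * polarization g x y + g y := by
  have h := hg x hx y hy
  rw [map_add_eq_polarization g] at h
  linarith

theorem map_sub_le (hg : ParallelogramOn S g) (hg0 : ∀ x ∈ S, 0 ≤ g x) (hx : x ∈ S)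
    (hy : y ∈ S) : g (x - y) ≤ 2 * g x + 2 * g y := by
  linarith [hg x hx y hy, hg0 _ (S.add_mem hx hy)]

theorem polarization_add_left (hg : ParallelogramOn S g) (hx : x ∈ S) (hy : y ∈ S)
    (hz : z ∈ S) : polarization g (x + y) z = polarization g x z + polarization g y z := by
  have h₁ := hg (x + z) (S.add_mem hx hz) y hy
  have h₂ := hg (y + z) (S.add_mem hy hz) x hx
  have h₃ := hg (x - y) (S.sub_mem hx hy) z hz
  have h₄ := hg x hx y hy
  have h₅ : g (y + z - x) = g (x - y - z) := by
    rw [← hg.map_neg (S.sub_mem (S.sub_mem hx hy) hz)]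
    congr 1
    abel
  rw [show x + z + y = x + y + z by abel, show x + z - y = x - y + z by abel] at h₁
  rw [show y + z + x = x + y + z by abel] at h₂
  rw [polarization, polarization, polarization]
  linarith

theorem polarization_add_right (hg : ParallelogramOn S g) (hx : x ∈ S) (hy : y ∈ S)
    (hz : z ∈ S) : polarization g x (y + z) = polarization g x y + polarization g x z := by
  simp only [polarization_comm g x]
  exact hg.polarization_add_left hy hz hx

theorem polarization_neg_left (hg : ParallelogramOn S g) (hx : x ∈ S) (hy : y ∈ S) :
    polarization g (-x) y = -polarization g x y := by
  have h := hg.polarization_add_left hx (S.neg_mem hx) hy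
  rw [add_neg_cancel, polarization, zero_add, hg.map_zero] at h
  linarith

theorem polarization_self (hg : ParallelogramOn S g) (hx : x ∈ S) : polarization g x x = g x := by
  have h := hg x hx x hx
  rw [sub_self, hg.map_zero] at h
  rw [polarization]
  linarith

theorem polarization_nsmul_left (hg : ParallelogramOn S g) (hx : x ∈ S) (hy : y ∈ S) (n : ℕ) :
    polarization g (n • x) y = n * polarization g x y := by
  induction n with
  | zero => simp [polarization, hg.map_zero]
  | succ n ih =>
    rw [succ_nsmul, hg.polarization_add_left (S.nsmul_mem hx n) hx hy, ih]
    push_cast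
    ring

theorem map_nsmul (hg : ParallelogramOn S g) (hx : x ∈ S) (n : ℕ) : g (n • x) = n ^ 2 * g x := by
  rw [← hg.polarization_self (S.nsmul_mem hx n), hg.polarization_nsmul_left hx (S.nsmul_mem hx n),
    polarization_comm, hg.polarization_nsmul_left hx hx, hg.polarization_self hx]
  ring

theorem two_mul_abs_polarization_le {q : G → ℝ} (hq : ParallelogramOn S q)
    (hg : ParallelogramOn S g) (hqg : ∀ x ∈ S, |q x| ≤ g x) (hx : x ∈ S) (hy : y ∈ S) (n : ℕ) :
    2 * n * |polarization q x y| ≤ n ^ 2 * g x + g y := by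
  have hnx := S.nsmul_mem hx n
  have hdiff : 4 * (n * polarization q x y) = q (n • x + y) - q (n • x - y) := by
    rw [← hq.polarization_nsmul_left hx hy, hq.map_sub hnx hy, map_add_eq_polarization q]
    ring
  have hsum : g (n • x + y) + g (n • x - y) = 2 * (n ^ 2 * g x) + 2 * g y := by
    rw [hg _ hnx _ hy, hg.map_nsmul hx]
  have h : |4 * (n * polarization q x y)| ≤ 2 * (n ^ 2 * g x) + 2 * g y := by
    rw [hdiff, ← hsum]
    exact (abs_sub _ _).trans
      (add_le_add (hqg _ (S.add_mem hnx hy)) (hqg _ (S.sub_mem hnx hy)))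
  rw [abs_mul, abs_mul, abs_of_pos four_pos, Nat.abs_cast] at h
  linarith

end ParallelogramOn

end Parallelogram

namespace ParallelogramOn

section WeaklyNull

variable {G : Type*} [AddCommGroup G] {S : AddSubgroup G} {W : G → ℝ} {w : ℕ → G}

theorem tendsto_polarization_of_eventually_lt (hW : ParallelogramOn S W) (hw : ∀ n, w n ∈ S)
    (h : ∀ y ∈ S, ∀ ε > 0, ∀ᶠ n in atTop, polarization W y (w n) < ε) {u : G} (hu : u ∈ S) :
    Tendsto (fun n => polarization W u (w n)) atTop (𝓝 0) := by
  refine tendsto_order.2 ⟨fun ε hε => ?_, fun ε hε => h u hu ε hε⟩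
  filter_upwards [h (-u) (S.neg_mem hu) (-ε) (neg_pos.2 hε)] with n hn
  rw [hW.polarization_neg_left hu (hw n)] at hn
  linarith

theorem exists_mem_map_le_mul_and_mul_le (hW : ParallelogramOn S W) {f : G → ℝ}
    (hf : ∀ x ∈ S, ∀ y ∈ S, f (x + y) = f x + f y) (hw : ∀ n, w n ∈ S) {B δ : ℝ}
    (hB : ∀ n, W (w n) ≤ B) (h : ∀ z ∈ S, ∃ n, polarization W z (w n) < 1 ∧ δ ≤ f (w n))
    (k : ℕ) : ∃ z ∈ S, W z ≤ k * (B + 2) ∧ k * δ ≤ f z := by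
  induction k with
  | zero =>
    have hf0 := hf 0 S.zero_mem 0 S.zero_mem
    rw [add_zero] at hf0
    exact ⟨0, S.zero_mem, by simp [hW.map_zero], by rw [Nat.cast_zero, zero_mul]; linarith⟩
  | succ k ih =>
    obtain ⟨z, hz, hWz, hfz⟩ := ih
    obtain ⟨n, hpol, hfn⟩ := h z hz
    refine ⟨z + w n, S.add_mem hz (hw n), ?_, ?_⟩
    · rw [map_add_eq_polarization W]
      push_cast
      linarith [hB n]
    · rw [hf z hz _ (hw n)]
      push_cast
      linarith

theorem eventually_polarization_lt_of_abs_le {q : G → ℝ} (hq : ParallelogramOn S q)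
    (hW : ParallelogramOn S W) (hqW : ∀ x ∈ S, |q x| ≤ W x) (hw : ∀ n, w n ∈ S) {B : ℝ}
    (hB : ∀ n, W (w n) ≤ B)
    (hpol : ∀ z ∈ S, Tendsto (fun n => polarization W z (w n)) atTop (𝓝 0)) {u : G}
    (hu : u ∈ S) {δ : ℝ} (hδ : 0 < δ) : ∀ᶠ n in atTop, polarization q u (w n) < δ := by
  by_contra hfreq
  simp only [not_eventually, not_lt] at hfreq
  have h (z) (hz : z ∈ S) : ∃ n, polarization W z (w n) < 1 ∧ δ ≤ polarization q u (w n) :=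
    (((hpol z hz).eventually (gt_mem_nhds one_pos)).and_frequently hfreq).exists
  obtain ⟨n, hn⟩ := exists_nat_ge ((B + 3) / (2 * δ))
  obtain ⟨k, hk⟩ := exists_nat_gt (n ^ 2 * W u)
  obtain ⟨z, hz, hWz, hfz⟩ :=
    hW.exists_mem_map_le_mul_and_mul_le (fun _ hx _ hy => hq.polarization_add_right hu hx hy)
      hw hB h k
  have hnδ : B + 3 ≤ 2 * n * δ := by
    rw [div_le_iff₀ (by positivity)] at hn
    linarith
  -- the `k` humps give `k (B + 3) ≤ 2 n k δ ≤ n² W u + W z ≤ n² W u + k (B + 2)`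
  have h₁ : (k : ℝ) * (B + 3) ≤ k * (2 * n * δ) := by gcongr
  have h₂ : 2 * n * (k * δ) ≤ 2 * n * |polarization q u z| := by
    gcongr
    exact hfz.trans (le_abs_self _)
  linarith [hq.two_mul_abs_polarization_le hW hqW hu hz n]

theorem tendsto_polarization_of_abs_le {q : G → ℝ} (hq : ParallelogramOn S q)
    (hW : ParallelogramOn S W) (hqW : ∀ x ∈ S, |q x| ≤ W x) (hw : ∀ n, w n ∈ S) {B : ℝ}
    (hB : ∀ n, W (w n) ≤ B)
    (hpol : ∀ z ∈ S, Tendsto (fun n => polarization W z (w n)) atTop (𝓝 0)) {u : G}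
    (hu : u ∈ S) : Tendsto (fun n => polarization q u (w n)) atTop (𝓝 0) :=
  hq.tendsto_polarization_of_eventually_lt hw
    (fun _ hy _ hε => hq.eventually_polarization_lt_of_abs_le hW hqW hw hB hpol hy hε) hu

variable [TopologicalSpace G] [IsTopologicalAddGroup G]

theorem eventually_polarization_lt_of_lowerSemicontinuousOn (hW : ParallelogramOn S W)
    (hWlsc : LowerSemicontinuousOn W S) (hw : ∀ n, w n ∈ S) (hw0 : Tendsto w atTop (𝓝 0))
    {B : ℝ} (hB : ∀ n, W (w n) ≤ B) {d : G} (hd : d ∈ S) {ε : ℝ} (hε : 0 < ε) :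
    ∀ᶠ n in atTop, polarization W d (w n) < ε := by
  obtain ⟨m, hm⟩ := exists_nat_gt (max (B / ε) 0)
  have hm0 : (0 : ℝ) < m := (le_max_right _ _).trans_lt hm
  have hBm : B < m * ε := (div_lt_iff₀ hε).1 ((le_max_left _ _).trans_lt hm)
  have hmd := S.nsmul_mem hd m
  have hlim : Tendsto (fun n => m • d - w n) atTop (𝓝[S] (m • d)) :=
    tendsto_nhdsWithin_iff.2
      ⟨by simpa using tendsto_const_nhds.sub hw0, .of_forall fun n => S.sub_mem hmd (hw n)⟩
  have hlt : W (m • d) - m * ε < W (m • d) := by linarith [mul_pos hm0 hε]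
  filter_upwards [hlim.eventually (hWlsc _ hmd _ hlt)] with n hn
  rw [hW.map_sub hmd (hw n), hW.polarization_nsmul_left hd (hw n)] at hn
  have : m * polarization W d (w n) < m * ε := by linarith [hB n]
  exact lt_of_mul_lt_mul_left this hm0.le

theorem tendsto_polarization_of_lowerSemicontinuousOn (hW : ParallelogramOn S W)
    (hWlsc : LowerSemicontinuousOn W S) (hw : ∀ n, w n ∈ S) (hw0 : Tendsto w atTop (𝓝 0))
    {B : ℝ} (hB : ∀ n, W (w n) ≤ B) :
    ∀ d ∈ S, Tendsto (fun n => polarization W d (w n)) atTop (𝓝 0) := fun _ hd =>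
  hW.tendsto_polarization_of_eventually_lt hw
    (fun _ hy _ hε => hW.eventually_polarization_lt_of_lowerSemicontinuousOn hWlsc hw hw0 hB hy hε)
    hd

theorem map_le_of_tendsto {T : G → ℝ} (hT : ParallelogramOn S T) (hW : ParallelogramOn S W)
    (hWlsc : LowerSemicontinuousOn W S) (hT0 : ∀ x ∈ S, 0 ≤ T x) (hTW : ∀ x ∈ S, |T x| ≤ W x)
    {v : ℕ → G} {u : G} (hv : ∀ n, v n ∈ S) (hu : u ∈ S) (hvu : Tendsto v atTop (𝓝 u)) {B : ℝ}
    (hB : ∀ n, W (v n - u) ≤ B) {c : ℝ} (hc : ∀ n, T (v n) ≤ c) : T u ≤ c := by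
  have hw (n : ℕ) : v n - u ∈ S := S.sub_mem (hv n) hu
  have hw0 : Tendsto (fun n => v n - u) atTop (𝓝 0) := by simpa using hvu.sub_const u
  have hpol := hT.tendsto_polarization_of_abs_le hW hTW hw hB
    (hW.tendsto_polarization_of_lowerSemicontinuousOn hWlsc hw hw0 hB) hu
  have hlim : Tendsto (fun n => T u + 2 * polarization T u (v n - u)) atTop (𝓝 (T u)) := by
    simpa using (hpol.const_mul 2).const_add (T u)
  refine le_of_tendsto' hlim fun n => ?_
  have hexp := map_add_eq_polarization T u (v n - u)
  rw [add_sub_cancel] at hexp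
  linarith [hc n, hT0 _ (hw n)]

end WeaklyNull

end ParallelogramOn

theorem ParallelogramOn.form_sum_le_of_tendsto {G : Type*} [AddCommGroup G] [TopologicalSpace G]
    [IsTopologicalAddGroup G] {S : AddSubgroup G} {P q N : G → ℝ} {a b : ℝ}
    (hP : ParallelogramOn S P)
    (hPlsc : LowerSemicontinuousOn P S) (hP0 : ∀ x ∈ S, 0 ≤ P x) (hq : ParallelogramOn S q)
    (hN : ParallelogramOn S N) (hNc : Continuous N) (ha : a < 1)
    (hqP : ∀ x ∈ S, |q x| ≤ a * P x + b * N x) {v : ℕ → G} {u : G} (hv : ∀ n, v n ∈ S)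
    (hu : u ∈ S) (hvu : Tendsto v atTop (𝓝 u)) {c : ℝ}
    (hc : ∀ n, P (v n) + q (v n) + b * N (v n) ≤ c) : P u + q u + b * N u ≤ c := by
  set T : G → ℝ := fun x => P x + q x + b * N x
  have hT : ParallelogramOn S T := (hP.add hq).add (hN.const_mul b)
  set W : G → ℝ := fun x => 2 * (P x + b * N x)
  have hW : ParallelogramOn S W := (hP.add (hN.const_mul b)).const_mul 2
  have hWlsc : LowerSemicontinuousOn W S :=
    (continuous_const_mul 2).comp_lowerSemicontinuousOn
      (hPlsc.add (hNc.const_mul b).continuousOn.lowerSemicontinuousOn)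
      (monotone_mul_left_of_nonneg zero_le_two)
  have hlow (x) (hx : x ∈ S) : (1 - a) * P x ≤ T x := by
    linarith [(abs_le.1 (hqP x hx)).1]
  have hPa (x) (hx : x ∈ S) : 0 ≤ (1 - a) * P x := mul_nonneg (by linarith) (hP0 x hx)
  have hT0 (x) (hx : x ∈ S) : 0 ≤ T x := (hPa x hx).trans (hlow x hx)
  have hTW (x) (hx : x ∈ S) : |T x| ≤ W x := by
    have := abs_le.1 (hqP x hx)
    rw [abs_of_nonneg (hT0 x hx)]
    linarith [hPa x hx]
  obtain ⟨C, hC⟩ := (((hNc.tendsto _).comp (hvu.sub_const u)).const_mul b).bddAbove_range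
  refine hT.map_le_of_tendsto hW hWlsc hT0 hTW hv hu hvu
    (B := 2 * ((2 * c + 2 * T u) / (1 - a) + C)) (fun n => ?_) hc
  have hTw := hT.map_sub_le hT0 (hv n) hu
  have hPw : P (v n - u) ≤ (2 * c + 2 * T u) / (1 - a) := by
    rw [le_div_iff₀ (by linarith), mul_comm]
    linarith [hlow _ (S.sub_mem (hv n) hu), hc n]
  have hNw : b * N (v n - u) ≤ C := hC ⟨n, rfl⟩
  linarith

theorem sub_lt_top_of_parallelogram {G : Type*} [AddCommGroup G] {Q : G → ℝ≥0∞}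
    (hQ : ∀ u v, Q u < ⊤ → Q v < ⊤ → Q (u + v) + Q (u - v) = 2 * Q u + 2 * Q v) {x y : G}
    (hx : Q x < ⊤) (hy : Q y < ⊤) : Q (x - y) < ⊤ := by
  have h : Q (x + y) + Q (x - y) < ⊤ := by
    rw [hQ x y hx hy]
    exact add_lt_top.2 ⟨mul_lt_top (by simp) hx, mul_lt_top (by simp) hy⟩
  exact (add_lt_top.1 h).2

theorem parallelogramOn_toReal {G : Type*} [AddCommGroup G] {Q : G → ℝ≥0∞} {S : AddSubgroup G}
    (hS : ∀ x ∈ S, Q x < ⊤)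
    (hQ : ∀ u v, Q u < ⊤ → Q v < ⊤ → Q (u + v) + Q (u - v) = 2 * Q u + 2 * Q v) :
    ParallelogramOn S fun x => (Q x).toReal := fun x hx y hy => by
  have h := congrArg ENNReal.toReal (hQ x y (hS x hx) (hS y hy))
  rwa [toReal_add (hS _ (S.add_mem hx hy)).ne (hS _ (S.sub_mem hx hy)).ne,
    toReal_add (mul_lt_top (by simp) (hS x hx)).ne (mul_lt_top (by simp) (hS y hy)).ne,
    toReal_mul, toReal_mul, toReal_ofNat] at h

theorem LowerSemicontinuous.lowerSemicontinuousOn_toReal {X : Type*} [TopologicalSpace X]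
    {f : X → ℝ≥0∞} (hf : LowerSemicontinuous f) {s : Set X} (hs : ∀ x ∈ s, f x ≠ ⊤) :
    LowerSemicontinuousOn (fun x => (f x).toReal) s := by
  intro x hx y hy
  rcases lt_or_ge y 0 with hy0 | hy0
  · exact .of_forall fun z => hy0.trans_le toReal_nonneg
  · have hlt : ENNReal.ofReal y < f x := (ofReal_lt_iff_lt_toReal hy0 (hs x hx)).2 hy
    filter_upwards [(hf x _ hlt).filter_mono nhdsWithin_le_nhds, self_mem_nhdsWithin] with z hz hzs
    exact (ofReal_lt_iff_lt_toReal hy0 (hs z hzs)).1 hz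

theorem parallelogramOn_norm_sq (𝕜 : Type*) {E : Type*} [RCLike 𝕜] [SeminormedAddCommGroup E]
    [InnerProductSpace 𝕜 E] (S : AddSubgroup E) : ParallelogramOn S fun x : E => ‖x‖ ^ 2 :=
  fun x _ y _ => by linarith [parallelogram_law_with_norm 𝕜 x y]

theorem lowerSemicontinuous_ite_ofReal {X : Type*} [TopologicalSpace X] [SequentialSpace X]
    {p : X → Prop} [DecidablePred p] {T : X → ℝ}
    (h : ∀ (v : ℕ → X) (u : X) (c : ℝ), (∀ n, p (v n)) → Tendsto v atTop (𝓝 u) →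
      (∀ n, T (v n) ≤ c) → p u ∧ T u ≤ c) :
    LowerSemicontinuous fun x => if p x then ENNReal.ofReal (T x) else ⊤ := by
  refine lowerSemicontinuous_iff_isClosed_preimage.2 fun y => ?_
  refine IsSeqClosed.isClosed fun v u hv hvu => ?_
  rcases eq_or_ne y ⊤ with rfl | hy
  · simp
  have hpv (n : ℕ) : p (v n) := by
    by_contra hn
    exact hy (top_le_iff.1 (by simpa [hn] using hv n))
  have hTv (n : ℕ) : T (v n) ≤ y.toReal := by
    simpa [hpv n, ofReal_le_iff_le_toReal hy] using hv n
  obtain ⟨hpu, hTu⟩ := h v u _ hpv hvu hTv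
  simpa [hpu, ofReal_le_iff_le_toReal hy] using hTu

theorem klmn_form_sum_closed_general
    {H : Type*} [NormedAddCommGroup H] [InnerProductSpace ℂ H]
    (Q₀ : H → ℝ≥0∞) (q : H → ℝ) (a b : ℝ)
    (ha1 : a < 1)
    (hdense : Dense {u : H | Q₀ u < ⊤})
    (hclosed : LowerSemicontinuous Q₀)
    (hQ₀par : ∀ u v : H, Q₀ u < ⊤ → Q₀ v < ⊤ →
      Q₀ (u + v) + Q₀ (u - v) = 2 * Q₀ u + 2 * Q₀ v)
    (hqpar : ∀ u v : H, Q₀ u < ⊤ → Q₀ v < ⊤ →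
      q (u + v) + q (u - v) = 2 * q u + 2 * q v)
    (hbound : ∀ u : H, Q₀ u < ⊤ → |q u| ≤ a * (Q₀ u).toReal + b * ‖u‖ ^ 2) :
    Dense {u : H | Q₀ u < ⊤} ∧
    (∀ u : H, Q₀ u < ⊤ → -(b * ‖u‖ ^ 2) ≤ (Q₀ u).toReal + q u) ∧
    LowerSemicontinuous (fun u : H =>
      if Q₀ u < ⊤ then ENNReal.ofReal ((Q₀ u).toReal + q u + b * ‖u‖ ^ 2) else ⊤) := by
  let D : AddSubgroup H := .ofSub {u | Q₀ u < ⊤} hdense.nonempty fun x hx y hy => by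
    simpa [sub_eq_add_neg] using sub_lt_top_of_parallelogram hQ₀par hx hy
  have hP := parallelogramOn_toReal (S := D) (fun _ h => h) hQ₀par
  have hPlsc := hclosed.lowerSemicontinuousOn_toReal (s := D) fun _ h => h.ne
  have hlow (u : H) (hu : Q₀ u < ⊤) :
      (1 - a) * (Q₀ u).toReal ≤ (Q₀ u).toReal + q u + b * ‖u‖ ^ 2 := by
    linarith [(abs_le.1 (hbound u hu)).1]
  have hPa (u : H) : 0 ≤ (1 - a) * (Q₀ u).toReal := mul_nonneg (by linarith) toReal_nonneg
  refine ⟨hdense, fun u hu => by linarith [hlow u hu, hPa u], ?_⟩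
  refine lowerSemicontinuous_ite_ofReal fun v u c hv hvu hc => ?_
  have hQv (n : ℕ) : Q₀ (v n) ≤ ENNReal.ofReal (c / (1 - a)) := by
    rw [← ofReal_toReal (hv n).ne]
    refine ofReal_le_ofReal ((le_div_iff₀ (by linarith)).2 ?_)
    linarith [hlow _ (hv n), hc n]
  have hu : Q₀ u < ⊤ :=
    ((hclosed.isClosed_preimage _).mem_of_tendsto hvu (.of_forall hQv)).trans_lt ofReal_lt_top
  exact ⟨hu, hP.form_sum_le_of_tendsto hPlsc (fun _ _ => toReal_nonneg)
    (fun x hx y hy => hqpar x y hx hy) (parallelogramOn_norm_sq ℂ D) (by fun_prop) ha1 hbound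
    hv hu hvu hc⟩

/-- KLMN-type stability, Kato VI.1.33. A closed nonnegative densely defined
form `Q₀` is encoded as a lower semicontinuous functional `Q₀ : H → ℝ≥0∞` (value `∞` outside
the form domain; for nonnegative forms, closedness is equivalent to lower semicontinuity)
satisfying the parallelogram law on its domain. If the symmetric form `q` satisfies
`|q(u)| ≤ a·Q₀(u) + b·‖u‖²` on `D(Q₀)` with `a ∈ [0,1)`, `b ≥ 0`, then the form sum
`Q₀ + q` with domain `D(Q₀)` is densely defined, semibounded from below by `-b`, and closed
(i.e. the shifted form functional is again lower semicontinuous). -/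
theorem klmn_form_sum_closed
    {H : Type*} [NormedAddCommGroup H] [InnerProductSpace ℂ H]
    (Q₀ : H → ℝ≥0∞) (q : H → ℝ) (a b : ℝ)
    (ha0 : 0 ≤ a) (ha1 : a < 1) (hb : 0 ≤ b)
    (hdense : Dense {u : H | Q₀ u < ⊤})
    (hclosed : LowerSemicontinuous Q₀)
    (hQ₀par : ∀ u v : H, Q₀ u < ⊤ → Q₀ v < ⊤ →
      Q₀ (u + v) + Q₀ (u - v) = 2 * Q₀ u + 2 * Q₀ v)
    (hqpar : ∀ u v : H, Q₀ u < ⊤ → Q₀ v < ⊤ →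
      q (u + v) + q (u - v) = 2 * q u + 2 * q v)
    (hbound : ∀ u : H, Q₀ u < ⊤ → |q u| ≤ a * (Q₀ u).toReal + b * ‖u‖ ^ 2) :
    Dense {u : H | Q₀ u < ⊤} ∧
    (∀ u : H, Q₀ u < ⊤ → -(b * ‖u‖ ^ 2) ≤ (Q₀ u).toReal + q u) ∧
    LowerSemicontinuous (fun u : H =>
      if Q₀ u < ⊤ then ENNReal.ofReal ((Q₀ u).toReal + q u + b * ‖u‖ ^ 2) else ⊤) :=
  klmn_form_sum_closed_general Q₀ q a b ha1 hdense hclosed hQ₀par hqpar hbound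
end

section
/- Integrability from the Dynkin class: if f : M → ℝ is measurable and there exists t₀ > 0 such that sup_{x∈M} ∫_0^{t₀} ∫_M p(s,x,y)|f(y)| dμ(y) ds < 1, where p(t,x,y) is the strictly positive heat kernel of a connected Riemannian manifold M, then f ∈ L¹_loc(M). -/
/-!
Pick any base point `x₀`. Since `∫_0^{t₀} ∫_M p(s,x₀,y)|f(y)| dμ(y) ds < 1`, the inner integral is
finite for some `s ∈ (0, t₀]`. The kernel `y ↦ p(s,x₀,y)` is continuous and positive, so on a
compact `K` it is bounded below by some `c > 0`, and then `c ∫_K |f| dμ ≤ ∫_M p(s,x₀,y)|f(y)| dμ(y)`.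
-/

open MeasureTheory Set ENNReal

theorem exists_mem_ne_top_of_setLIntegral_ne_top {α : Type*} [MeasurableSpace α]
    {ν : Measure α} {A : Set α} {G : α → ℝ≥0∞} (hA : MeasurableSet A) (hνA : ν A ≠ 0)
    (hG : ∫⁻ s in A, G s ∂ν ≠ ⊤) : ∃ s ∈ A, G s ≠ ⊤ := by
  by_contra! hG_top
  refine hG (eq_top_iff.2 ?_)
  calc ⊤ = ∫⁻ _ in A, ⊤ ∂ν := by rw [setLIntegral_const, top_mul hνA]
    _ ≤ ∫⁻ s in A, G s ∂ν := setLIntegral_mono' hA fun s hs => (hG_top s hs).ge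

theorem IsCompact.exists_ne_zero_forall_le {β : Type*} [TopologicalSpace β] {K : Set β}
    {k : β → ℝ≥0∞} (hK : IsCompact K) (hk : ContinuousOn k K) (hpos : ∀ y ∈ K, k y ≠ 0) :
    ∃ c ≠ 0, ∀ y ∈ K, c ≤ k y := by
  rcases K.eq_empty_or_nonempty with rfl | hKne
  · exact ⟨1, one_ne_zero, by simp⟩
  obtain ⟨z, hzK, hz_min⟩ := hK.exists_isMinOn hKne hk
  exact ⟨k z, hpos z hzK, fun y hy => hz_min hy⟩

theorem setLIntegral_lt_top_of_lintegral_mul_ne_top {α : Type*} [TopologicalSpace α]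
    [MeasurableSpace α] [OpensMeasurableSpace α] {μ : Measure α} {k g : α → ℝ≥0∞} {K : Set α}
    (hK : IsCompact K) (hk : Continuous k) (hpos : ∀ y ∈ K, k y ≠ 0)
    (hkg : ∫⁻ y, k y * g y ∂μ ≠ ⊤) : ∫⁻ y in K, g y ∂μ < ⊤ := by
  obtain ⟨c, hc, hck⟩ := hK.exists_ne_zero_forall_le hk.continuousOn hpos
  -- `K` need not be measurable; the closed superset `{c ≤ k}` is.
  set S := {y | c ≤ k y}
  have hS : MeasurableSet S := (isClosed_le continuous_const hk).measurableSet
  have hS_bound : c * ∫⁻ y in S, g y ∂μ ≤ ∫⁻ y, k y * g y ∂μ :=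
    calc c * ∫⁻ y in S, g y ∂μ ≤ ∫⁻ y in S, c * g y ∂μ := lintegral_const_mul_le _ _
      _ ≤ ∫⁻ y in S, k y * g y ∂μ := setLIntegral_mono' hS fun y hy => by gcongr; exact hy
      _ ≤ ∫⁻ y, k y * g y ∂μ := setLIntegral_le_lintegral _ _
  calc ∫⁻ y in K, g y ∂μ ≤ ∫⁻ y in S, g y ∂μ := lintegral_mono_set hck
    _ < ⊤ := lt_top_of_mul_ne_top_right (ne_top_of_le_ne_top hkg hS_bound) hc

theorem locally_integrable_of_dynkin_class_general
    {M : Type*} [TopologicalSpace M]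
    [MeasurableSpace M] [OpensMeasurableSpace M]
    (μ : Measure M)
    (p : ℝ → M → M → ℝ≥0∞) (f : M → ℝ)
    (hppos : ∀ t : ℝ, 0 < t → ∀ x y : M, 0 < p t x y)
    (hpcont : ContinuousOn (fun q : ℝ × M × M => p q.1 q.2.1 q.2.2)
      (Ioi (0:ℝ) ×ˢ (univ : Set (M × M))))
    (hCD : ∃ t₀ : ℝ, 0 < t₀ ∧
      (⨆ x : M, ∫⁻ s in Ioc (0:ℝ) t₀, ∫⁻ y, p s x y * ENNReal.ofReal |f y| ∂μ) < 1) :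
    ∀ K : Set M, IsCompact K → ∫⁻ y in K, ENNReal.ofReal |f y| ∂μ < ⊤ := by
  intro K hK
  rcases K.eq_empty_or_nonempty with rfl | ⟨x₀, -⟩
  · simp
  obtain ⟨t₀, ht₀, hsup⟩ := hCD
  have hx₀ : ∫⁻ s in Ioc (0:ℝ) t₀, ∫⁻ y, p s x₀ y * ENNReal.ofReal |f y| ∂μ ≠ ⊤ :=
    ((le_iSup_of_le x₀ le_rfl).trans_lt (hsup.trans one_lt_top)).ne
  obtain ⟨s, hs, hs_fin⟩ :=
    exists_mem_ne_top_of_setLIntegral_ne_top measurableSet_Ioc (by simpa using ht₀) hx₀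
  have hk : Continuous (p s x₀) :=
    hpcont.comp_continuous (f := fun y => (s, x₀, y)) (by fun_prop) fun _ => ⟨hs.1, trivial⟩
  exact setLIntegral_lt_top_of_lintegral_mul_ne_top hK hk
    (fun y _ => (hppos s hs.1 x₀ y).ne') hs_fin

/-- integrability from the Dynkin class. Let `M` be a connected Riemannian
manifold with volume measure `μ` and minimal heat kernel `p(t,x,y)` of `e^{tΔ/2}`, which is
jointly continuous on `(0,∞) × M × M` and strictly positive. If `f` is measurable and there
is `t₀ > 0` with `sup_x ∫_0^{t₀} ∫_M p(s,x,y)|f(y)| dμ(y) ds < 1`, then `f ∈ L¹_loc(M)`. -/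
theorem locally_integrable_of_dynkin_class
    {M : Type*} [TopologicalSpace M] [ConnectedSpace M]
    [MeasurableSpace M] [OpensMeasurableSpace M]
    (μ : Measure M)
    (p : ℝ → M → M → ℝ≥0∞) (f : M → ℝ) (hf : Measurable f)
    (hppos : ∀ t : ℝ, 0 < t → ∀ x y : M, 0 < p t x y)
    (hpcont : ContinuousOn (fun q : ℝ × M × M => p q.1 q.2.1 q.2.2)
      (Ioi (0:ℝ) ×ˢ (univ : Set (M × M))))
    (hCD : ∃ t₀ : ℝ, 0 < t₀ ∧
      (⨆ x : M, ∫⁻ s in Ioc (0:ℝ) t₀, ∫⁻ y, p s x y * ENNReal.ofReal |f y| ∂μ) < 1) :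
    ∀ K : Set M, IsCompact K → ∫⁻ y in K, ENNReal.ofReal |f y| ∂μ < ⊤ :=
  locally_integrable_of_dynkin_class_general μ p f hppos hpcont hCD
end
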